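/- Let c: N → [d] be a coloring compatible with the linear order on N, with color classes N_i. Then for all S, T ⊆ N, writing S_i = S ∩ N_i, T_i = T ∩ N_i: e_T ⌞ e_S = (-1)^q · ⋀_{i=1}^{d} (e_{T_i} ⌞ e_{S_i}), where q = Σ_{i=1}^{d} Σ_{j=i+1}^{d} (|S_j| - |T_j|)·|T_i|. -/

import Mathlib

open Finset

variable {N : Type*} [Fintype N] [LinearOrder N]

/-- inv(S,T) = number of pairs (s,t) ∈ S × T with s > t. -/
def invCount (S T : Finset N) : ℕ := ((S ×ˢ T).filter fun p => p.2 < p.1).card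

/-- sgn(S,T) = (-1)^inv(S,T). -/
def esign (S T : Finset N) : ℝ := (-1 : ℝ) ^ invCount S T

/-- The basis vector e_S of the exterior algebra, modelled as `Finset N → ℝ`. -/
def eb (S : Finset N) : Finset N → ℝ := fun T => if T = S then 1 else 0

/-- The bilinear exterior product, defined on basis vectors by
`e_S ∧ e_T = sgn(S,T) e_{S∪T}` if `S ∩ T = ∅`, and `0` otherwise. -/
def wedge (f g : Finset N → ℝ) : Finset N → ℝ :=
  fun U => ∑ S ∈ U.powerset, esign S (U \ S) * f S * g (U \ S)

/-- Inner product on the exterior algebra making `{e_S}` orthonormal. -/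
def ip (f g : Finset N → ℝ) : ℝ := ∑ S : Finset N, f S * g S

/-- A vector of V (coordinates `a`) viewed inside the exterior algebra. -/
def vec (a : N → ℝ) : Finset N → ℝ := fun T => ∑ i : N, if T = {i} then a i else 0

/-- Inner product on V in coordinates. -/
def ipV (a b : N → ℝ) : ℝ := ∑ i : N, a i * b i

/-- Wedge product of a list of elements of the exterior algebra (e_∅ is the unit). -/
def wedgeList (l : List (Finset N → ℝ)) : Finset N → ℝ := l.foldr wedge (eb ∅)

/-- Ordered wedge product f_S = f_{s₁} ∧ ⋯ ∧ f_{s_k} for S = {s₁ < ⋯ < s_k},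
for a family of vectors of V given in coordinates. -/
def wedgeFam (f : N → N → ℝ) (S : Finset N) : Finset N → ℝ :=
  wedgeList ((S.sort (· ≤ ·)).map (fun v => vec (f v)))

/-- A family of vectors of V (in coordinates) is orthonormal. -/
def Orthonormalish (f : N → N → ℝ) : Prop :=
  ∀ u v : N, ipV (f u) (f v) = if u = v then 1 else 0

/-- The bilinear left interior product, defined on basis vectors by
`e_T ⌞ e_S = sgn(S∖T, T)·e_{S∖T}` if `T ⊆ S` and `0` otherwise. -/
def lint (g f : Finset N → ℝ) : Finset N → ℝ :=
  fun U => ∑ T : Finset N, if Disjoint T U then esign U T * g T * f (U ∪ T) else 0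


set_option linter.unusedSectionVars false
section Aux
variable {N : Type*} [Fintype N] [LinearOrder N]

lemma wedge_apply (f g : Finset N → ℝ) (U : Finset N) :
    wedge f g U = ∑ S ∈ U.powerset, esign S (U \ S) * f S * g (U \ S) := rfl

lemma wedge_zero_left (g : Finset N → ℝ) : wedge (0 : Finset N → ℝ) g = 0 := by
  funext U; simp [wedge]

lemma wedge_zero_right (f : Finset N → ℝ) : wedge f (0 : Finset N → ℝ) = 0 := by
  funext U; simp [wedge]

lemma wedge_smul_left (r : ℝ) (f g : Finset N → ℝ) :
    wedge (r • f) g = r • wedge f g := by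
  funext U; simp [wedge, Finset.mul_sum]; ring_nf
  exact Finset.sum_congr rfl fun S _ => by ring

lemma wedge_smul_right (r : ℝ) (f g : Finset N → ℝ) :
    wedge f (r • g) = r • wedge f g := by
  funext U; simp [wedge, Finset.mul_sum]; ring_nf
  exact Finset.sum_congr rfl fun S _ => by ring

lemma esign_of_invCount_zero {A B : Finset N} (h : invCount A B = 0) : esign A B = 1 := by
  simp [esign, h]

lemma wedge_eb {A B : Finset N} (h : Disjoint A B) :
    wedge (eb A) (eb B) = esign A B • eb (A ∪ B) := by
  classical
  funext U
  rw [wedge_apply]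
  rw [Finset.sum_congr rfl (fun S hS => ?_ :
    ∀ S ∈ U.powerset, esign S (U \ S) * eb A S * eb B (U \ S)
      = if S = A then (if U \ S = B then esign S (U \ S) else 0) else 0)]
  · rw [Finset.sum_ite_eq' U.powerset A]
    by_cases hA : A ∈ U.powerset
    · simp only [hA, if_true]
      by_cases hB : U \ A = B
      · have hU : U = A ∪ B := by
          rw [← hB]; rw [Finset.union_sdiff_of_subset (Finset.mem_powerset.mp hA)]
        subst hU
        rw [Finset.union_sdiff_cancel_left h, if_pos rfl]
        simp [eb, Pi.smul_apply, smul_eq_mul]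
      · have hU : U ≠ A ∪ B := by
          intro hU; apply hB; rw [hU]; rw [Finset.union_sdiff_cancel_left h]
        simp [hB, hU, eb, Pi.smul_apply, smul_eq_mul]
    · have hU : U ≠ A ∪ B := by
        intro hU; apply hA; rw [Finset.mem_powerset, hU]; exact Finset.subset_union_left
      simp only [hA, if_false, Pi.smul_apply, eb, hU, if_neg hU, smul_eq_mul, mul_zero]
  · simp only [eb]
    by_cases h1 : S = A <;> by_cases h2 : U \ S = B <;> simp [h1, h2]

lemma lint_eb (S T : Finset N) :
    lint (eb T) (eb S) = if T ⊆ S then esign (S \ T) T • eb (S \ T) else 0 := by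
  classical
  funext U
  show (∑ T' : Finset N, if Disjoint T' U then esign U T' * eb T T' * eb S (U ∪ T') else 0) = _
  rw [Finset.sum_congr rfl (fun T' _ => ?_ :
    ∀ T' ∈ Finset.univ, (if Disjoint T' U then esign U T' * eb T T' * eb S (U ∪ T') else 0)
      = if T' = T then (if Disjoint T U ∧ U ∪ T = S then esign U T else 0) else 0)]
  · rw [Finset.sum_ite_eq' Finset.univ T]
    simp only [Finset.mem_univ, if_true]
    by_cases hTS : T ⊆ S
    · by_cases hU : U = S \ T
      · have hd : Disjoint T U := by rw [hU]; exact disjoint_sdiff_self_right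
        have hUn : U ∪ T = S := by rw [hU, Finset.sdiff_union_of_subset hTS]
        subst hU
        rw [if_pos ⟨hd, hUn⟩, if_pos hTS]
        simp [eb, Pi.smul_apply, smul_eq_mul]
      · simp only [hTS, if_true, Pi.smul_apply, eb, hU, if_false, smul_eq_mul, mul_zero]
        by_cases hd : Disjoint T U
        · have : ¬ (U ∪ T = S) := by
            intro hUn; apply hU
            rw [← hUn]; rw [Finset.union_sdiff_cancel_right hd.symm]
          simp [this, hd]
        · simp [hd]
    · have : ¬ (Disjoint T U ∧ U ∪ T = S) := by
        rintro ⟨_, hUn⟩; exact hTS (hUn ▸ Finset.subset_union_right)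
      simp [this, hTS]
  · simp only [eb]
    by_cases h1 : T' = T
    · subst h1
      by_cases hd : Disjoint T' U <;> by_cases h2 : U ∪ T' = S <;> simp [hd, h2]
    · by_cases hd : Disjoint T' U <;> simp [h1, hd]

end Aux

section Aux2
set_option linter.unusedSectionVars false
variable {N : Type*} [Fintype N] [LinearOrder N]

lemma mem_foldr_union {l : List (Finset N)} {x : N} :
    x ∈ l.foldr (· ∪ ·) ∅ ↔ ∃ A ∈ l, x ∈ A := by
  induction l with
  | nil => simp
  | cons A l ih => simp [ih]

lemma wedgeList_cons (f : Finset N → ℝ) (l : List (Finset N → ℝ)) :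
    wedgeList (f :: l) = wedge f (wedgeList l) := rfl

lemma wedgeList_zero {l : List (Finset N → ℝ)} (h : (0 : Finset N → ℝ) ∈ l) :
    wedgeList l = 0 := by
  induction l with
  | nil => simp at h
  | cons f l ih =>
    rcases List.mem_cons.mp h with h | h
    · rw [wedgeList_cons, ← h, wedge_zero_left]
    · rw [wedgeList_cons, ih h, wedge_zero_right]

lemma wedgeList_smul_eb (L : List (ℝ × Finset N))
    (h : (L.map Prod.snd).Pairwise fun A B => ∀ a ∈ A, ∀ b ∈ B, a < b) :
    wedgeList (L.map fun p => p.1 • eb p.2)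
      = (L.map Prod.fst).prod • eb ((L.map Prod.snd).foldr (· ∪ ·) ∅) := by
  induction L with
  | nil => simp [wedgeList]
  | cons p L ih =>
    simp only [List.map_cons, List.pairwise_cons] at h ⊢
    rw [wedgeList_cons, ih h.2, wedge_smul_left, wedge_smul_right]
    set U := (L.map Prod.snd).foldr (· ∪ ·) ∅ with hU
    have key : ∀ a ∈ p.2, ∀ b ∈ U, a < b := by
      intro a ha b hb
      obtain ⟨A, hA, hbA⟩ := mem_foldr_union.mp hb
      obtain ⟨q, hq, rfl⟩ := List.mem_map.mp hA
      exact h.1 q.2 (List.mem_map_of_mem (f := Prod.snd) hq) a ha b hbA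
    have hdisj : Disjoint p.2 U :=
      Finset.disjoint_left.mpr fun {a} ha hb => lt_irrefl a (key a ha a hb)
    rw [wedge_eb hdisj]
    have hsign : esign p.2 U = 1 := by
      apply esign_of_invCount_zero
      rw [invCount, Finset.card_eq_zero, Finset.filter_eq_empty_iff]
      rintro ⟨s, t⟩ hp
      rw [Finset.mem_product] at hp
      exact (key s hp.1 t hp.2).asymm
    rw [hsign]
    simp only [List.foldr_cons, List.prod_cons, one_smul, smul_smul]
    rfl

lemma invCount_base (X Y : Finset N) :
    invCount X Y = ∑ x ∈ X, ∑ y ∈ Y, if y < x then 1 else 0 := by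
  rw [invCount, Finset.card_filter, Finset.sum_product]

lemma invCount_decompose {d : ℕ} (c : N → Fin d) (X Y : Finset N) :
    invCount X Y = ∑ a : Fin d, ∑ b : Fin d,
      invCount (X.filter fun x => c x = a) (Y.filter fun x => c x = b) := by
  classical
  rw [invCount_base,
    ← Finset.sum_fiberwise X (fun x => c x) (fun x => ∑ y ∈ Y, if y < x then 1 else 0)]
  refine Finset.sum_congr rfl fun a _ => ?_
  rw [Finset.sum_congr rfl
    (fun x _ => (Finset.sum_fiberwise Y (fun y => c y) (fun y => if y < x then 1 else 0)).symm),
    Finset.sum_comm]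
  exact Finset.sum_congr rfl fun b _ => (invCount_base _ _).symm

lemma invCount_filter_eval {d : ℕ} {c : N → Fin d}
    (hlt : ∀ u v : N, c u < c v → u < v) (X Y : Finset N) (a b : Fin d) :
    invCount (X.filter fun x => c x = a) (Y.filter fun x => c x = b)
      = (if b < a then (X.filter fun x => c x = a).card * (Y.filter fun x => c x = b).card else 0)
        + (if a = b then invCount (X.filter fun x => c x = a) (Y.filter fun x => c x = b)
            else 0) := by
  rcases lt_trichotomy a b with h | h | h
  · have h0 : invCount (X.filter fun x => c x = a) (Y.filter fun x => c x = b) = 0 := by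
      rw [invCount, Finset.card_eq_zero, Finset.filter_eq_empty_iff]
      rintro ⟨s, t⟩ hp
      rw [Finset.mem_product, Finset.mem_filter, Finset.mem_filter] at hp
      exact (hlt s t (by rw [hp.1.2, hp.2.2]; exact h)).asymm
    rw [h0, if_neg (asymm h), if_neg h.ne, add_zero]
  · subst h
    simp [lt_irrefl]
  · rw [if_pos h, if_neg h.ne', add_zero, invCount, Finset.filter_true_of_mem,
      Finset.card_product]
    rintro ⟨s, t⟩ hp
    rw [Finset.mem_product, Finset.mem_filter, Finset.mem_filter] at hp
    exact hlt t s (by rw [hp.1.2, hp.2.2]; exact h)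

end Aux2

/-- For a coloring c compatible with the order on N:
e_T ⌞ e_S = (-1)^q ⋀_i (e_{T_i} ⌞ e_{S_i}), with
q = Σ_i Σ_{j>i} (|S_j| - |T_j|)·|T_i|. -/
theorem lint_color_decompose (d : ℕ) (c : N → Fin d)
    (hc : ∀ u v : N, u ≤ v → c u ≤ c v) (S T : Finset N) :
    lint (eb T) (eb S)
      = ((-1 : ℝ) ^ (∑ i : Fin d, ∑ j : Fin d, if i < j then
            (((S.filter fun x => c x = j).card : ℤ) - ((T.filter fun x => c x = j).card : ℤ))
              * ((T.filter fun x => c x = i).card : ℤ) else 0)) •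
          wedgeList (List.ofFn fun i : Fin d =>
            lint (eb (T.filter fun x => c x = i)) (eb (S.filter fun x => c x = i))) := by
  classical
  have hlt : ∀ u v : N, c u < c v → u < v := fun u v h =>
    lt_of_not_ge fun hle => absurd (hc v u hle) (not_le.mpr h)
  by_cases hTS : T ⊆ S
  · have hTsub : ∀ i : Fin d, (T.filter fun x => c x = i) ⊆ (S.filter fun x => c x = i) :=
      fun i => Finset.filter_subset_filter _ hTS
    have hA : ∀ i : Fin d, (S.filter fun x => c x = i) \ (T.filter fun x => c x = i)
        = (S \ T).filter fun x => c x = i := by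
      intro i; ext x
      simp only [Finset.mem_sdiff, Finset.mem_filter]
      tauto
    have hfac : (List.ofFn fun i : Fin d =>
        lint (eb (T.filter fun x => c x = i)) (eb (S.filter fun x => c x = i)))
        = (List.ofFn fun i : Fin d =>
            (esign ((S \ T).filter fun x => c x = i) (T.filter fun x => c x = i),
             (S \ T).filter fun x => c x = i)).map fun p => p.1 • eb p.2 := by
      rw [List.map_ofFn]
      congr 1
      funext i
      simp only [Function.comp_apply]
      rw [lint_eb, if_pos (hTsub i), hA i]
    have hpair : (((List.ofFn fun i : Fin d =>
        (esign ((S \ T).filter fun x => c x = i) (T.filter fun x => c x = i),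
         (S \ T).filter fun x => c x = i)).map Prod.snd).Pairwise
          fun A B => ∀ a ∈ A, ∀ b ∈ B, a < b) := by
      rw [List.map_ofFn]
      rw [List.pairwise_ofFn]
      intro i j hij a ha b hb
      simp only [Function.comp_apply, Finset.mem_filter] at ha hb
      exact hlt a b (by rw [ha.2, hb.2]; exact hij)
    have hUnion : ((List.ofFn fun i : Fin d =>
        (S \ T).filter fun x => c x = i).foldr (· ∪ ·) ∅) = S \ T := by
      ext x
      rw [mem_foldr_union]
      constructor
      · rintro ⟨A, hA', hx⟩
        obtain ⟨i, rfl⟩ := List.mem_ofFn.mp hA'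
        exact Finset.mem_of_mem_filter x hx
      · intro hx
        exact ⟨_, List.mem_ofFn.mpr ⟨c x, rfl⟩, Finset.mem_filter.mpr ⟨hx, rfl⟩⟩
    set n : ℕ := ∑ a : Fin d, ∑ b : Fin d, if b < a then
        ((S \ T).filter fun x => c x = a).card * (T.filter fun x => c x = b).card else 0
      with hn
    have hq : (∑ i : Fin d, ∑ j : Fin d, if i < j then
        (((S.filter fun x => c x = j).card : ℤ) - ((T.filter fun x => c x = j).card : ℤ))
          * ((T.filter fun x => c x = i).card : ℤ) else 0) = (n : ℤ) := by
      rw [Finset.sum_comm, hn, Nat.cast_sum]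
      refine Finset.sum_congr rfl fun a _ => ?_
      rw [Nat.cast_sum]
      refine Finset.sum_congr rfl fun b _ => ?_
      by_cases hba : b < a
      · rw [if_pos hba, if_pos hba, ← hA a, Finset.card_sdiff_of_subset (hTsub a)]
        have := Finset.card_le_card (hTsub a)
        push_cast [this]
        ring
      · rw [if_neg hba, if_neg hba, Nat.cast_zero]
    have hinv : invCount (S \ T) T = n + ∑ i : Fin d,
        invCount ((S \ T).filter fun x => c x = i) (T.filter fun x => c x = i) := by
      rw [invCount_decompose c (S \ T) T,
        Finset.sum_congr rfl fun a _ => Finset.sum_congr rfl fun b _ =>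
          invCount_filter_eval hlt (S \ T) T a b,
        Finset.sum_congr rfl fun a _ => Finset.sum_add_distrib,
        Finset.sum_add_distrib, hn]
      congr 1
      refine Finset.sum_congr rfl fun a _ => ?_
      rw [Finset.sum_ite_eq Finset.univ a, if_pos (Finset.mem_univ a)]
    have hesign : esign (S \ T) T = (-1 : ℝ) ^ n * ∏ i : Fin d,
        esign ((S \ T).filter fun x => c x = i) (T.filter fun x => c x = i) := by
      rw [esign, hinv, pow_add]
      congr 1
      simp [esign, Finset.prod_pow_eq_pow_sum]
    rw [lint_eb, if_pos hTS, hfac, wedgeList_smul_eb _ hpair, List.map_ofFn, List.map_ofFn]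
    simp only [Function.comp_def]
    rw [List.prod_ofFn, hUnion, hq, zpow_natCast, hesign, smul_smul]
  · obtain ⟨x, hxT, hxS⟩ := Finset.not_subset.mp hTS
    have hzero : lint (eb (T.filter fun y => c y = c x)) (eb (S.filter fun y => c y = c x))
        = 0 := by
      rw [lint_eb, if_neg]
      intro hsub
      exact hxS (Finset.mem_of_mem_filter x (hsub (Finset.mem_filter.mpr ⟨hxT, rfl⟩)))
    have hmem : (0 : Finset N → ℝ) ∈ List.ofFn fun i : Fin d =>
        lint (eb (T.filter fun y => c y = i)) (eb (S.filter fun y => c y = i)) := by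
      rw [List.mem_ofFn]
      exact ⟨c x, hzero⟩
    rw [lint_eb, if_neg hTS, wedgeList_zero hmem, smul_zero]
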